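/- arXiv:1305.0402 — 4 statements merged into one kernel-verified Lean document; each statement's English description precedes it below -/
import Mathlib

section
/- If θ : ℝ → ℝ satisfies θ'(s) = −a·sin(θ(s) + δ) with a > 0, then θ(s) = −δ + 2·arctan(e^{-as}) is a solution, and every other solution with values in (−δ, −δ+π) is a translate θ(s + c) of it. -/
/-!
Writing `φ = θ + δ`, the function `log (tan (φ / 2))` is a first integral up to a linear term:
its derivative along a solution is `φ' / sin φ = -a`. Hence `tan (φ s / 2) = exp (-a * (s + c))`,
and since `φ / 2 ∈ (0, π / 2)` this inverts to `φ s = 2 * arctan (exp (-a * (s + c)))`.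
-/

open Real

theorem sin_two_mul_arctan (x : ℝ) : sin (2 * arctan x) = 2 * x / (1 + x ^ 2) := by
  rw [sin_eq_two_mul_tan_half_div_one_add_tan_half_sq, mul_div_cancel_left₀ _ two_ne_zero,
    tan_arctan]

theorem hasDerivAt_two_mul_arctan_exp (a s : ℝ) :
    HasDerivAt (fun s => 2 * arctan (exp (-a * s))) (-a * sin (2 * arctan (exp (-a * s)))) s := by
  refine ((((hasDerivAt_id' s).const_mul (-a)).exp.arctan).const_mul 2).congr_deriv ?_
  rw [sin_two_mul_arctan]
  ring

theorem tan_half_pos {x : ℝ} (hx : x ∈ Set.Ioo 0 π) : 0 < tan (x / 2) :=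
  tan_pos_of_pos_of_lt_pi_div_two (by linarith [hx.1]) (by linarith [hx.2])

theorem hasDerivAt_log_tan_half {x : ℝ} (hx : x ∈ Set.Ioo 0 π) :
    HasDerivAt (fun x => log (tan (x / 2))) (1 / sin x) x := by
  have hcos : 0 < cos (x / 2) :=
    cos_pos_of_mem_Ioo ⟨by linarith [pi_pos, hx.1], by linarith [hx.2]⟩
  have htan : HasDerivAt (fun x => tan (x / 2)) (1 / cos (x / 2) ^ 2 * (1 / 2)) x :=
    (hasDerivAt_tan hcos.ne').comp (h₂ := tan) x ((hasDerivAt_id' x).div_const 2)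
  refine (htan.log (tan_half_pos hx).ne').congr_deriv ?_
  have hsin : sin x = 2 * sin (x / 2) * cos (x / 2) := by rw [← sin_two_mul]; ring_nf
  rw [hsin, tan_eq_sin_div_cos]
  field_simp

theorem log_tan_half_add_mul_eq {a : ℝ} {φ : ℝ → ℝ} (hφ : ∀ s, HasDerivAt φ (-a * sin (φ s)) s)
    (hmem : ∀ s, φ s ∈ Set.Ioo 0 π) (s : ℝ) :
    log (tan (φ s / 2)) + a * s = log (tan (φ 0 / 2)) := by
  have hderiv : ∀ t, HasDerivAt (fun t => log (tan (φ t / 2)) + a * t) 0 t := by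
    intro t
    have hsin : sin (φ t) ≠ 0 := (sin_pos_of_mem_Ioo (hmem t)).ne'
    refine (((hasDerivAt_log_tan_half (hmem t)).comp t (hφ t)).add
      ((hasDerivAt_id' t).const_mul a)).congr_deriv ?_
    rw [one_div_mul_eq_div, mul_div_assoc, div_self hsin]
    ring
  simpa using is_const_of_deriv_eq_zero (fun t => (hderiv t).differentiableAt)
    (fun t => (hderiv t).deriv) s 0

theorem exists_eq_two_mul_arctan_exp {a : ℝ} (ha : a ≠ 0) {φ : ℝ → ℝ}
    (hφ : ∀ s, HasDerivAt φ (-a * sin (φ s)) s) (hmem : ∀ s, φ s ∈ Set.Ioo 0 π) :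
    ∃ c, ∀ s, φ s = 2 * arctan (exp (-a * (s + c))) := by
  refine ⟨-log (tan (φ 0 / 2)) / a, fun s => ?_⟩
  have hexp : exp (-a * (s + -log (tan (φ 0 / 2)) / a)) = tan (φ s / 2) := by
    rw [← log_tan_half_add_mul_eq hφ hmem s]
    have harg : -a * s + -a * (-(log (tan (φ s / 2)) + a * s) / a) = log (tan (φ s / 2)) := by
      field_simp
      ring
    rw [mul_add, harg, exp_log (tan_half_pos (hmem s))]
  rw [hexp, arctan_tan (by linarith [pi_pos, (hmem s).1]) (by linarith [(hmem s).2])]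
  ring

theorem stmt9 (a δ : ℝ) (ha : 0 < a)
    (θ₀ : ℝ → ℝ)
    (hθ₀ : ∀ s, θ₀ s = -δ + 2 * Real.arctan (Real.exp (-a * s))) :
    (∀ s : ℝ, HasDerivAt θ₀ (-a * Real.sin (θ₀ s + δ)) s) ∧
    ∀ θ : ℝ → ℝ, (∀ s : ℝ, HasDerivAt θ (-a * Real.sin (θ s + δ)) s) →
      (∀ s : ℝ, θ s ∈ Set.Ioo (-δ) (-δ + Real.pi)) →
      ∃ c : ℝ, ∀ s : ℝ, θ s = θ₀ (s + c) := by
  obtain rfl : θ₀ = fun s => -δ + 2 * arctan (exp (-a * s)) := funext hθ₀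
  refine ⟨fun s => ?_, fun θ hθ hmem => ?_⟩
  · simpa using (hasDerivAt_two_mul_arctan_exp a s).const_add (-δ)
  · obtain ⟨c, hc⟩ := exists_eq_two_mul_arctan_exp (φ := fun s => θ s + δ) ha.ne'
      (fun s => (hθ s).add_const δ)
      (fun s => ⟨by linarith [(hmem s).1], by linarith [(hmem s).2]⟩)
    exact ⟨c, fun s => by linarith [hc s]⟩
end

section
/- Suppose α : ℝ → ℝ² is a unit-speed curve with α'(s) = (cos θ(s), sin θ(s)), and β(t) = α(vt) for some v > 0. If the Newton equation m v²θ'(s)·n(s) = λ(s)·n(s) − tan δ·λ(s)·α'(s) − (0, mg) holds with n(s) = (−sin θ(s), cos θ(s)) and m > 0, then λ(s) = −m g cot δ · sin θ(s) and θ'(s) = −(g/(v² sin δ))·sin(θ(s) + δ). -/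
/-!
Project the Newton equation onto the moving frame `α' = (cos θ, sin θ)`, `n = (-sin θ, cos θ)`.
Gravity `(0, m g)` has components `m g sin θ` along `α'` and `m g cos θ` along `n`, so the
tangential component gives `tan δ · λ = -m g sin θ`, and the normal component gives
`m v² θ' = λ - m g cos θ = -m g (cot δ sin θ + cos θ) = -m g sin (θ + δ) / sin δ`.
-/

open Real

theorem newton_frame_components {a L k c θ : ℝ}
    (h : a • ((-sin θ, cos θ) : ℝ × ℝ)
      = L • ((-sin θ, cos θ) : ℝ × ℝ) - (k * L) • ((cos θ, sin θ) : ℝ × ℝ) - (0, c)) :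
    k * L = -c * sin θ ∧ a = L - c * cos θ := by
  have hx : a * -sin θ = L * -sin θ - k * L * cos θ - 0 := by
    simpa using congrArg Prod.fst h
  have hy : a * cos θ = L * cos θ - k * L * sin θ - c := by
    simpa using congrArg Prod.snd h
  have hpyth := sin_sq_add_cos_sq θ
  constructor
  · linear_combination cos θ * hx + sin θ * hy - k * L * hpyth
  · linear_combination -sin θ * hx + cos θ * hy - (a - L) * hpyth

theorem sin_pos_and_cos_pos_of_pos_of_lt_pi_div_two {δ : ℝ} (h0 : 0 < δ) (h1 : δ < π / 2) :
    0 < sin δ ∧ 0 < cos δ :=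
  ⟨sin_pos_of_pos_of_lt_pi h0 (by linarith [pi_pos]),
    cos_pos_of_mem_Ioo ⟨by linarith [pi_pos], h1⟩⟩

theorem eq_neg_mul_cot_mul_of_tan_mul_eq {δ L c x : ℝ} (hs : sin δ ≠ 0) (hc : cos δ ≠ 0)
    (h : tan δ * L = -c * x) : L = -c * cot δ * x := by
  rw [tan_eq_sin_div_cos] at h
  rw [cot_eq_cos_div_sin]
  field_simp at h ⊢
  linear_combination h

theorem cot_mul_sin_add_cos {δ θ : ℝ} (hs : sin δ ≠ 0) :
    cot δ * sin θ + cos θ = sin (θ + δ) / sin δ := by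
  rw [cot_eq_cos_div_sin, sin_add]
  field_simp

theorem stmt13_general (m v g δ : ℝ) (hm : 0 < m) (hv : 0 < v)
    (hδ1 : 0 < δ) (hδ2 : δ < Real.pi / 4)
    (θ dθ L : ℝ → ℝ) (n : ℝ → ℝ × ℝ)
    (hn : ∀ s, n s = (-Real.sin (θ s), Real.cos (θ s)))
    (hNewton : ∀ s : ℝ,
      (m * v ^ 2 * dθ s) • n s
        = L s • n s - (Real.tan δ * L s) • (Real.cos (θ s), Real.sin (θ s))
          - (0, m * g)) :
    ∀ s : ℝ, L s = -m * g * Real.cot δ * Real.sin (θ s) ∧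
      dθ s = -(g / (v ^ 2 * Real.sin δ)) * Real.sin (θ s + δ) := by
  intro s
  obtain ⟨hsδ, hcδ⟩ := sin_pos_and_cos_pos_of_pos_of_lt_pi_div_two hδ1 (by linarith [pi_pos])
  obtain ⟨htan, hnormal⟩ := newton_frame_components (hn s ▸ hNewton s)
  have hL : L s = -m * g * cot δ * sin (θ s) :=
    (eq_neg_mul_cot_mul_of_tan_mul_eq hsδ.ne' hcδ.ne' htan).trans (by ring)
  refine ⟨hL, ?_⟩
  have hdθ : m * v ^ 2 * dθ s = -(m * g) * (sin (θ s + δ) / sin δ) := by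
    rw [hnormal, hL, ← cot_mul_sin_add_cos hsδ.ne']
    ring
  field_simp at hdθ ⊢
  linear_combination hdθ

theorem stmt13 (m v g δ : ℝ) (hm : 0 < m) (hv : 0 < v) (hg : 0 < g)
    (hδ1 : 0 < δ) (hδ2 : δ < Real.pi / 4)
    (θ dθ L : ℝ → ℝ) (n : ℝ → ℝ × ℝ)
    (hθ : ∀ s, HasDerivAt θ (dθ s) s)
    (hn : ∀ s, n s = (-Real.sin (θ s), Real.cos (θ s)))
    (hNewton : ∀ s : ℝ,
      (m * v ^ 2 * dθ s) • n s
        = L s • n s - (Real.tan δ * L s) • (Real.cos (θ s), Real.sin (θ s))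
          - (0, m * g)) :
    ∀ s : ℝ, L s = -m * g * Real.cot δ * Real.sin (θ s) ∧
      dθ s = -(g / (v ^ 2 * Real.sin δ)) * Real.sin (θ s + δ) :=
  stmt13_general m v g δ hm hv hδ1 hδ2 θ dθ L n hn hNewton
end

section
/- Let s₀ = arcsinh(cot δ)/a, λ(t) = m g cot δ · y_δ'(s₀ − vt) and β(t) = α_δ(s₀ − vt)-reparametrized curve γ_δ(vt). Then (0, −mg) + λ(t)·n_δ(vt) + tan δ·λ(t)·α_δ'(s₀ − vt) = m v²·α_δ''(s₀ − vt), i.e. Newton's second law with friction coefficient tan δ holds on the lower ramp, and λ(t) ≥ 0 for t ≥ 0. -/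
open Real

/-- Inverse cotangent with values in (0, π). -/
noncomputable def arccot (x : ℝ) : ℝ := Real.pi / 2 - Real.arctan x

/-!
The ramp has unit tangent `α'(s) = (tanh (a s), sech (a s))` and curvature `a sech (a s)`, so after
the rotation `α_δ'' = a sech (a s) • n_δ`. Split Newton's law into its tangential and normal parts:
the tangential part is exactly the choice `λ = m g cot δ · y_δ'`, and, since `g = a v² sin δ`, the
normal part reduces to `sin δ · x_δ' + cos δ · y_δ' = sech (a s)`, i.e. to undoing the rotation.
Finally `y_δ'(s)` has the sign of `cos δ - sin δ sinh (a s)`, which is nonnegative as long as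
`sinh (a s) ≤ sinh (a s₀) = cot δ`.
-/

noncomputable def rampX (a s : ℝ) : ℝ := s + (1 / a) * log (1 + exp (-2 * a * s))

noncomputable def rampY (a s : ℝ) : ℝ := (2 / a) * arccot (exp (-a * s))

lemma hasDerivAt_rampX {a : ℝ} (ha : a ≠ 0) (s : ℝ) :
    HasDerivAt (rampX a) (sinh (a * s) / cosh (a * s)) s := by
  have hexp : HasDerivAt (fun u => 1 + exp (-2 * a * u)) (-2 * a * exp (-2 * a * s)) s := by
    simpa [mul_comm] using (((hasDerivAt_id s).const_mul (-2 * a)).exp).const_add 1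
  refine ((hasDerivAt_id s).add ((hexp.log (by positivity)).const_mul (1 / a))).congr_deriv ?_
  have hE : exp (-2 * a * s) = exp (-(a * s)) / exp (a * s) := by
    rw [← exp_sub]; ring_nf
  rw [sinh_eq, cosh_eq, hE]
  field_simp
  ring

lemma hasDerivAt_rampY {a : ℝ} (ha : a ≠ 0) (s : ℝ) :
    HasDerivAt (rampY a) (1 / cosh (a * s)) s := by
  have hexp : HasDerivAt (fun u => exp (-a * u)) (-a * exp (-a * s)) s := by
    simpa [mul_comm] using ((hasDerivAt_id s).const_mul (-a)).exp
  refine ((((hasDerivAt_arctan _).comp s hexp).const_sub (π / 2)).const_mul (2 / a)).congr_deriv ?_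
  have hE : exp (-a * s) = (exp (a * s))⁻¹ := by rw [← exp_neg]; ring_nf
  rw [cosh_eq, exp_neg, hE]
  field_simp

lemma hasDerivAt_affine_sinh_div_cosh (a c d s : ℝ) :
    HasDerivAt (fun s => (c * sinh (a * s) + d) / cosh (a * s))
      (a * (c - d * sinh (a * s)) / cosh (a * s) ^ 2) s := by
  have hsinh := ((hasDerivAt_id' s).const_mul a).sinh
  have hcosh := ((hasDerivAt_id' s).const_mul a).cosh
  refine (((hsinh.const_mul c).add_const d).div hcosh (cosh_pos _).ne').congr_deriv ?_
  field_simp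
  linear_combination a * c * cosh_sq (a * s)

/-- The unit tangent `(tanh (a s), sech (a s))` of the ramp, rotated by `-δ`. -/
noncomputable def rotatedTangent (a δ s : ℝ) : ℝ × ℝ :=
  ((cos δ * sinh (a * s) + sin δ) / cosh (a * s),
    (-sin δ * sinh (a * s) + cos δ) / cosh (a * s))

lemma hasDerivAt_rotatedRamp_fst {a : ℝ} (ha : a ≠ 0) (δ s : ℝ) :
    HasDerivAt (fun s => cos δ * rampX a s + sin δ * rampY a s) (rotatedTangent a δ s).1 s := by
  refine (((hasDerivAt_rampX ha s).const_mul _).add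
    ((hasDerivAt_rampY ha s).const_mul _)).congr_deriv ?_
  simp only [rotatedTangent]
  ring

lemma hasDerivAt_rotatedRamp_snd {a : ℝ} (ha : a ≠ 0) (δ s : ℝ) :
    HasDerivAt (fun s => -sin δ * rampX a s + cos δ * rampY a s) (rotatedTangent a δ s).2 s := by
  refine (((hasDerivAt_rampX ha s).const_mul _).add
    ((hasDerivAt_rampY ha s).const_mul _)).congr_deriv ?_
  simp only [rotatedTangent]
  ring

lemma rotatedTangent_snd_nonneg {a δ s : ℝ} (hδ : 0 < sin δ) (h : sinh (a * s) ≤ cot δ) :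
    0 ≤ (rotatedTangent a δ s).2 := by
  rw [cot_eq_cos_div_sin, le_div_iff₀ hδ] at h
  exact div_nonneg (by linarith) (cosh_pos _).le

section RotatedTangent

variable (a δ s : ℝ)

lemma hasDerivAt_rotatedTangent :
    HasDerivAt (rotatedTangent a δ)
      ((a / cosh (a * s)) • ((rotatedTangent a δ s).2, -(rotatedTangent a δ s).1)) s := by
  refine ((hasDerivAt_affine_sinh_div_cosh a _ _ s).prodMk
    (hasDerivAt_affine_sinh_div_cosh a _ _ s)).congr_deriv ?_
  simp only [rotatedTangent, Prod.smul_mk, smul_eq_mul, Prod.mk.injEq]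
  constructor <;> field_simp <;> ring

lemma rotatedTangent_fst_sq_add_snd_sq :
    (rotatedTangent a δ s).1 ^ 2 + (rotatedTangent a δ s).2 ^ 2 = 1 := by
  simp only [rotatedTangent]
  field_simp
  linear_combination (sinh (a * s) ^ 2 + 1) * sin_sq_add_cos_sq δ - cosh_sq (a * s)

lemma sin_mul_rotatedTangent_fst_add_cos_mul_snd :
    sin δ * (rotatedTangent a δ s).1 + cos δ * (rotatedTangent a δ s).2 = 1 / cosh (a * s) := by
  simp only [rotatedTangent]
  field_simp
  linear_combination sin_sq_add_cos_sq δ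

end RotatedTangent

/-- Along a curve with unit tangent `(p, q)`: `L` is the normal force, `μ` the friction
coefficient and `κ` mass times speed squared times curvature. -/
lemma gravity_add_normal_add_friction_eq {m g μ L κ p q : ℝ} (hpq : p ^ 2 + q ^ 2 = 1)
    (htangential : μ * L = m * g * q) (hnormal : L + m * g * p = κ) :
    ((0 : ℝ), -(m * g)) + L • (q, -p) + (μ * L) • (p, q) = κ • (q, -p) := by
  subst hnormal
  simp only [Prod.smul_mk, smul_eq_mul, Prod.mk_add_mk, Prod.mk.injEq, htangential]
  constructor
  · ring
  · linear_combination (m * g) * hpq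

theorem stmt14 (g v m δ : ℝ) (hg : 0 < g) (hv : 0 < v) (hm : 0 < m)
    (hδ1 : 0 < δ) (hδ2 : δ < Real.pi / 4)
    (a : ℝ) (ha : a = g / (v ^ 2 * Real.sin δ))
    (x y xδ yδ : ℝ → ℝ) (αδ : ℝ → ℝ × ℝ) (nδ : ℝ → ℝ × ℝ) (L : ℝ → ℝ) (s₀ : ℝ)
    (hx : ∀ s, x s = s + (1 / a) * Real.log (1 + Real.exp (-2 * a * s)))
    (hy : ∀ s, y s = (2 / a) * arccot (Real.exp (-a * s)))
    (hxδ : ∀ s, xδ s = Real.cos δ * x s + Real.sin δ * y s)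
    (hyδ : ∀ s, yδ s = -Real.sin δ * x s + Real.cos δ * y s)
    (hαδ : ∀ s, αδ s = (xδ s, yδ s))
    (hs₀ : s₀ = Real.arsinh (Real.cot δ) / a)
    (hnδ : ∀ s, nδ s = (deriv yδ (s₀ - s), -(deriv xδ (s₀ - s))))
    (hL : ∀ t, L t = m * g * Real.cot δ * deriv yδ (s₀ - v * t)) :
    (∀ t : ℝ,
      (0, -(m * g)) + L t • nδ (v * t) + (Real.tan δ * L t) • deriv αδ (s₀ - v * t)
        = (m * v ^ 2) • deriv (deriv αδ) (s₀ - v * t)) ∧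
    ∀ t : ℝ, 0 ≤ t → 0 ≤ L t := by
  have hsin : 0 < sin δ := sin_pos_of_pos_of_lt_pi hδ1 (by linarith [pi_pos])
  have hcos : 0 < cos δ := cos_pos_of_mem_Ioo ⟨by linarith, by linarith [pi_pos]⟩
  have ha₀ : 0 < a := ha ▸ by positivity
  obtain rfl : x = rampX a := funext hx
  obtain rfl : y = rampY a := funext hy
  have hxδ' : ∀ s, HasDerivAt xδ (rotatedTangent a δ s).1 s :=
    funext hxδ ▸ hasDerivAt_rotatedRamp_fst ha₀.ne' δ
  have hyδ' : ∀ s, HasDerivAt yδ (rotatedTangent a δ s).2 s :=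
    funext hyδ ▸ hasDerivAt_rotatedRamp_snd ha₀.ne' δ
  have hT : deriv αδ = rotatedTangent a δ :=
    funext fun s => funext hαδ ▸ ((hxδ' s).prodMk (hyδ' s)).deriv
  refine ⟨fun t => ?_, fun t ht => ?_⟩
  · rw [hnδ, hL, hT, (hasDerivAt_rotatedTangent a δ _).deriv, (hxδ' _).deriv, (hyδ' _).deriv,
      smul_smul]
    refine gravity_add_normal_add_friction_eq (rotatedTangent_fst_sq_add_snd_sq a δ _) ?_ ?_
    · rw [tan_eq_sin_div_cos, cot_eq_cos_div_sin]
      field_simp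
    · have hg' : g = a * v ^ 2 * sin δ := by rw [ha]; field_simp
      rw [cot_eq_cos_div_sin, div_eq_mul_one_div a,
        ← sin_mul_rotatedTangent_fst_add_cos_mul_snd a δ, hg']
      field_simp
      ring
  · have hsinh : sinh (a * (s₀ - v * t)) ≤ cot δ := by
      rw [← sinh_arsinh (cot δ), sinh_le_sinh, ← mul_div_cancel₀ (arsinh (cot δ)) ha₀.ne', ← hs₀]
      nlinarith [mul_nonneg (mul_nonneg ha₀.le hv.le) ht]
    rw [hL, (hyδ' _).deriv, cot_eq_cos_div_sin]
    exact mul_nonneg (by positivity) (rotatedTangent_snd_nonneg hsin hsinh)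
end

section
/- Let γ : ℝ → Σ satisfy γ'(s) = X(γ(s)) with X(y) = −(g/v²)(e₃ − (e₃·y)y + (y₃/μ)N(y)), and set α(s) = ∫₀ˢ γ(u) du, β(t) = α(vt), λ(y) = −(g/μ)y₃ ≥ 0. Then m·β''(t) = −m g e₃ + m λ(γ(vt)) N(γ(vt)) − m λ(γ(vt)) μ γ(vt), i.e. Newton's second law with gravity, normal force of magnitude mλ, and kinetic friction with coefficient μ holds, and ‖β'(t)‖ = v. -/
open Real
open scoped RealInnerProductSpace

/-! By the fundamental theorem of calculus and the chain rule, `β' t = v • γ (v t)`, a vector of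
norm `v` since `γ` stays on the unit sphere, and `β'' t = v² • X (γ (v t))`. Newton's law is then
a linear identity in `e₃`, `γ (v t)` and `N (γ (v t))`, once `⟪e₃, y⟫ = y₃` is substituted. -/

section RescaledPrimitive

variable {E : Type*} [NormedAddCommGroup E] [NormedSpace ℝ E] [CompleteSpace E]

theorem deriv_integral_comp_mul {γ : ℝ → E} (hγ : Continuous γ) (a v : ℝ) :
    deriv (fun t => ∫ u in a..v * t, γ u) = fun t => v • γ (v * t) := by
  funext t
  rw [deriv_comp_mul_left v (fun s => ∫ u in a..s, γ u), hγ.deriv_integral]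

theorem deriv_deriv_integral_comp_mul {γ : ℝ → E} {X : E → E}
    (hγ : ∀ s, HasDerivAt γ (X (γ s)) s) (a v t : ℝ) :
    deriv (deriv fun t => ∫ u in a..v * t, γ u) t = (v ^ 2) • X (γ (v * t)) := by
  have hγc : Continuous γ := continuous_iff_continuousAt.2 fun s => (hγ s).continuousAt
  rw [deriv_integral_comp_mul hγc,
    show (fun t => v • γ (v * t)) = v • fun t => γ (v * t) from rfl, deriv_const_smul_field,
    deriv_comp_mul_left v γ, (hγ _).deriv, smul_smul, sq]

end RescaledPrimitive

theorem smul_sq_smul_eq_gravity_add_normal_sub_friction {E : Type*} [AddCommGroup E] [Module ℝ E]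
    {v μ : ℝ} (hv : v ≠ 0) (hμ : μ ≠ 0) (m g c : ℝ) (e y n : E) :
    m • (v ^ 2) • (-(g / v ^ 2)) • (e - c • y + (c / μ) • n)
      = -(m * g) • e + (m * (-(g / μ) * c)) • n - (m * (-(g / μ) * c) * μ) • y := by
  match_scalars <;> field_simp

theorem stmt17_general (g v m μ : ℝ) (hg : 0 < g) (hv : 0 < v)
    (hμ1 : 0 < μ)
    (S : Set (EuclideanSpace ℝ (Fin 3)))
    (hS : S = {y : EuclideanSpace ℝ (Fin 3) | ‖y‖ = 1 ∧ y 2 ≤ 0})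
    (N : EuclideanSpace ℝ (Fin 3) → EuclideanSpace ℝ (Fin 3))
    (e₃ : EuclideanSpace ℝ (Fin 3)) (he₃ : e₃ = EuclideanSpace.single 2 1)
    (X : EuclideanSpace ℝ (Fin 3) → EuclideanSpace ℝ (Fin 3))
    (hX : ∀ y, X y = (-(g / v ^ 2)) • (e₃ - ⟪e₃, y⟫ • y + (y 2 / μ) • N y))
    (γ : ℝ → EuclideanSpace ℝ (Fin 3))
    (hγS : ∀ s, γ s ∈ S)
    (hγ : ∀ s : ℝ, HasDerivAt γ (X (γ s)) s)
    (L : EuclideanSpace ℝ (Fin 3) → ℝ)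
    (hL : ∀ y, L y = -(g / μ) * y 2)
    (α β : ℝ → EuclideanSpace ℝ (Fin 3))
    (hα : ∀ s, α s = ∫ u in (0:ℝ)..s, γ u)
    (hβ : ∀ t, β t = α (v * t)) :
    ∀ t : ℝ,
      (0 ≤ L (γ (v * t))) ∧
      m • deriv (deriv β) t
        = -(m * g) • e₃ + (m * L (γ (v * t))) • N (γ (v * t))
          - (m * L (γ (v * t)) * μ) • γ (v * t) ∧
      ‖deriv β t‖ = v := by
  intro t
  have hγc : Continuous γ := continuous_iff_continuousAt.2 fun s => (hγ s).continuousAt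
  have hβ_eq : β = fun t => ∫ u in (0:ℝ)..v * t, γ u := funext fun t => by rw [hβ, hα]
  obtain ⟨hγ_norm, hγ_low⟩ : ‖γ (v * t)‖ = 1 ∧ γ (v * t) 2 ≤ 0 := by
    simpa [hS] using hγS (v * t)
  have he₃_inner : ⟪e₃, γ (v * t)⟫ = γ (v * t) 2 := by
    rw [he₃, EuclideanSpace.inner_single_left]; simp
  refine ⟨?_, ?_, ?_⟩
  · rw [hL]
    exact mul_nonneg_of_nonpos_of_nonpos (neg_nonpos.2 (div_pos hg hμ1).le) hγ_low
  · rw [hβ_eq, deriv_deriv_integral_comp_mul hγ, hX, he₃_inner, hL,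
      smul_sq_smul_eq_gravity_add_normal_sub_friction hv.ne' hμ1.ne']
  · rw [hβ_eq, deriv_integral_comp_mul hγc, norm_smul, hγ_norm, Real.norm_of_nonneg hv.le, mul_one]

theorem stmt17 (g v m μ : ℝ) (hg : 0 < g) (hv : 0 < v) (hm : 0 < m)
    (hμ1 : 0 < μ) (hμ2 : μ < 1)
    (S : Set (EuclideanSpace ℝ (Fin 3)))
    (hS : S = {y : EuclideanSpace ℝ (Fin 3) | ‖y‖ = 1 ∧ y 2 ≤ 0})
    (N : EuclideanSpace ℝ (Fin 3) → EuclideanSpace ℝ (Fin 3))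
    (hNunit : ∀ y ∈ S, ‖N y‖ = 1)
    (hNtang : ∀ y ∈ S, ⟪N y, y⟫ = 0)
    (e₃ : EuclideanSpace ℝ (Fin 3)) (he₃ : e₃ = EuclideanSpace.single 2 1)
    (X : EuclideanSpace ℝ (Fin 3) → EuclideanSpace ℝ (Fin 3))
    (hX : ∀ y, X y = (-(g / v ^ 2)) • (e₃ - ⟪e₃, y⟫ • y + (y 2 / μ) • N y))
    (γ : ℝ → EuclideanSpace ℝ (Fin 3))
    (hγS : ∀ s, γ s ∈ S)
    (hγ : ∀ s : ℝ, HasDerivAt γ (X (γ s)) s)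
    (L : EuclideanSpace ℝ (Fin 3) → ℝ)
    (hL : ∀ y, L y = -(g / μ) * y 2)
    (α β : ℝ → EuclideanSpace ℝ (Fin 3))
    (hα : ∀ s, α s = ∫ u in (0:ℝ)..s, γ u)
    (hβ : ∀ t, β t = α (v * t)) :
    ∀ t : ℝ,
      (0 ≤ L (γ (v * t))) ∧
      m • deriv (deriv β) t
        = -(m * g) • e₃ + (m * L (γ (v * t))) • N (γ (v * t))
          - (m * L (γ (v * t)) * μ) • γ (v * t) ∧
      ‖deriv β t‖ = v :=
  stmt17_general g v m μ hg hv hμ1 S hS N e₃ he₃ X hX γ hγS hγ L hL α β hα hβ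
end
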